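/- arXiv:2303.04897 — 2 statements merged into one kernel-verified Lean document; each statement's English description precedes it below -/
import Mathlib

section
/- Let χ : ℝ≤0 → ℝ≤0 be a concave, increasing, differentiable function with χ(-∞) = -∞ satisfying |t·χ'(t)| ≤ M·|χ(t)| for all t ≤ 0, where M > 0. Then for all t ≤ 0 and all c ≥ 1, one has -χ(c·t) ≤ -c^M·χ(t). -/
open Set Real Filter

/-- Key pointwise consequence of the growth bound. -/
lemma key_growth (M : ℝ) (χ : ℝ → ℝ)
    (hneg : ∀ t ≤ (0:ℝ), χ t ≤ 0)
    (hgrowth : ∀ t ≤ (0:ℝ), |t * deriv χ t| ≤ M * |χ t|)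
    {v : ℝ} (hv : v ≤ 0) : M * χ v ≤ v * deriv χ v := by
  have h := hgrowth v hv
  rw [abs_le, abs_of_nonpos (hneg v hv)] at h
  linarith [h.1]

/-- No zeros of `χ` on the negative axis. -/
lemma no_zero (M : ℝ) (hM : 0 < M) (χ : ℝ → ℝ)
    (hneg : ∀ t ≤ (0:ℝ), χ t ≤ 0)
    (hdiff : ∀ t ≤ (0:ℝ), DifferentiableAt ℝ χ t)
    (hlim : Filter.Tendsto χ Filter.atBot Filter.atBot)
    (hgrowth : ∀ t ≤ (0:ℝ), |t * deriv χ t| ≤ M * |χ t|) :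
    ∀ t < (0:ℝ), χ t < 0 := by
  intro t ht
  rcases lt_or_eq_of_le (hneg t ht.le) with h | h
  · exact h
  exfalso
  set K := M / (-t) with hK
  have hKpos : 0 < K := div_pos hM (by linarith)
  -- every u ≤ t is a zero
  have hzero : ∀ u ≤ t, χ u = 0 := by
    intro u hu
    set G := fun v => Real.exp (K * v) * (-χ v) with hG
    have hDer : ∀ v ∈ Set.Ioo u t, HasDerivAt G
        (Real.exp (K * v) * K * (-χ v) + Real.exp (K * v) * (-(deriv χ v))) v := by
      intro v hv
      have hv0 : v ≤ 0 := by linarith [hv.2]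
      have h1 : HasDerivAt (fun v => Real.exp (K * v)) (Real.exp (K * v) * K) v := by
        simpa using ((hasDerivAt_id v).const_mul K).exp
      exact h1.mul ((hdiff v hv0).hasDerivAt.neg)
    have hmonoG : MonotoneOn G (Set.Icc u t) := by
      apply monotoneOn_of_deriv_nonneg (convex_Icc u t)
      · intro v hv
        have hv0 : v ≤ 0 := by linarith [hv.2]
        exact (((Real.continuous_exp.comp (continuous_const.mul continuous_id)).continuousAt).mul
          ((hdiff v hv0).continuousAt.neg)).continuousWithinAt
      · intro v hv
        rw [interior_Icc] at hv
        exact ((hDer v hv).differentiableAt).differentiableWithinAt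
      · intro v hv
        rw [interior_Icc] at hv
        rw [(hDer v hv).deriv]
        have hv0 : v < 0 := by linarith [hv.2]
        have hkey := key_growth M χ hneg hgrowth hv0.le
        have hχv := hneg v hv0.le
        have hexp := Real.exp_pos (K * v)
        -- need χ' v ≤ K * (-χ v)
        have hbound : deriv χ v ≤ K * (-χ v) := by
          rw [hK, div_mul_eq_mul_div, le_div_iff₀ (by linarith : (0:ℝ) < -t)]
          rcases le_or_gt 0 (deriv χ v) with hd | hd
          · nlinarith [hv.2]
          · nlinarith
        nlinarith
    have hG1 : G u ≤ G t := hmonoG (Set.mem_Icc.2 ⟨le_refl u, hu⟩) (Set.mem_Icc.2 ⟨hu, le_refl t⟩) hu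
    have hGt : G t = 0 := by simp [hG, h]
    have hGu : 0 ≤ G u := by
      have hχu := hneg u (by linarith)
      have hexp' := Real.exp_pos (K * u)
      exact mul_nonneg (le_of_lt hexp') (by linarith)
    have : G u = 0 := le_antisymm (hGt ▸ hG1) hGu
    have hexp := Real.exp_pos (K * u)
    have : -χ u = 0 := by
      rcases mul_eq_zero.1 this with h' | h'
      · exact absurd h' (ne_of_gt hexp)
      · exact h'
    linarith
  -- contradiction with hlim
  have := (Filter.tendsto_atBot.1 hlim) (-1)
  rcases Filter.eventually_atBot.1 this with ⟨a, ha⟩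
  have h1 := ha (min a t) (min_le_left _ _)
  have h2 := hzero (min a t) (min_le_right _ _)
  linarith

/-- Lemma 3.1 (Lemma 2.2 in [TV21]): growth estimate for weights in the class `W⁺_M`,
i.e. concave increasing `χ : (-∞,0] → (-∞,0]` with `χ(-∞) = -∞` and `|t χ'(t)| ≤ M |χ(t)|`. -/
theorem stmt0 (M : ℝ) (hM : 0 < M) (χ : ℝ → ℝ)
    (hneg : ∀ t ≤ (0:ℝ), χ t ≤ 0)
    (hconc : ConcaveOn ℝ (Set.Iic (0:ℝ)) χ)
    (hmono : MonotoneOn χ (Set.Iic (0:ℝ)))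
    (hdiff : ∀ t ≤ (0:ℝ), DifferentiableAt ℝ χ t)
    (hlim : Filter.Tendsto χ Filter.atBot Filter.atBot)
    (hgrowth : ∀ t ≤ (0:ℝ), |t * deriv χ t| ≤ M * |χ t|) :
    ∀ t ≤ (0:ℝ), ∀ c ≥ (1:ℝ), -χ (c * t) ≤ -(c ^ M) * χ t := by
  have hnz := no_zero M hM χ hneg hdiff hlim hgrowth
  intro t ht c hc
  have hcpos : (0:ℝ) < c := by linarith
  have hcM : (1:ℝ) ≤ c ^ M := Real.one_le_rpow hc hM.le
  rcases eq_or_lt_of_le ht with h0 | ht'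
  · -- t = 0
    rw [h0, mul_zero]
    have := hneg 0 le_rfl
    nlinarith
  -- t < 0
  have hct : c * t ≤ t := by nlinarith
  have hct0 : c * t < 0 := by nlinarith
  have hχt : χ t < 0 := hnz t ht'
  have hχv : ∀ v ∈ Set.Icc (c * t) t, χ v < 0 := fun v hv => hnz v (lt_of_le_of_lt hv.2 ht')
  set F := fun v => Real.log (-χ v) - M * Real.log (-v) with hF
  have hDer : ∀ v ∈ Set.Icc (c * t) t,
      HasDerivAt F (-(deriv χ v) / (-χ v) - M * (-1 / -v)) v := by
    intro v hv
    have hv0 : v < 0 := lt_of_le_of_lt hv.2 ht'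
    have hχ := hχv v hv
    have h1 : HasDerivAt (fun v => Real.log (-χ v)) (-(deriv χ v) / (-χ v)) v :=
      ((hdiff v hv0.le).hasDerivAt.neg).log (by show -χ v ≠ 0; linarith)
    have h2 : HasDerivAt (fun v => Real.log (-v)) (-1 / -v) v :=
      ((hasDerivAt_id v).neg).log (by show -v ≠ 0; intro h; simp at h; linarith)
    exact h1.sub (h2.const_mul M)
  have hmonoF : MonotoneOn F (Set.Icc (c * t) t) := by
    apply monotoneOn_of_deriv_nonneg (convex_Icc _ _)
    · exact fun v hv => ((hDer v hv).continuousAt).continuousWithinAt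
    · intro v hv
      rw [interior_Icc] at hv
      exact ((hDer v (Set.mem_Icc_of_Ioo hv)).differentiableAt).differentiableWithinAt
    · intro v hv
      rw [interior_Icc] at hv
      have hv' := Set.mem_Icc_of_Ioo hv
      rw [(hDer v hv').deriv]
      have hv0 : v < 0 := lt_of_le_of_lt hv'.2 ht'
      have hχ := hχv v hv'
      have hkey := key_growth M χ hneg hgrowth hv0.le
      have e1 : -(deriv χ v) / (-χ v) = (-(deriv χ v)) / (-χ v) := rfl
      have h3 : M / v ≤ deriv χ v / χ v := by
        rw [show M / v = (-M) / (-v) by rw [neg_div_neg_eq],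
          show deriv χ v / χ v = (-(deriv χ v)) / (-χ v) by rw [neg_div_neg_eq]]
        rw [div_le_div_iff₀ (by linarith) (by linarith)]
        nlinarith
      have e2 : -(deriv χ v) / (-χ v) = deriv χ v / χ v := neg_div_neg_eq _ _
      have e3 : (-1 : ℝ) / -v = 1 / v := neg_div_neg_eq _ _
      rw [e2, e3]
      rw [one_div, ← div_eq_mul_inv]
      linarith
  have hFle : F (c * t) ≤ F t :=
    hmonoF (Set.mem_Icc.2 ⟨le_rfl, hct⟩) (Set.mem_Icc.2 ⟨hct, le_rfl⟩) hct
  have hχct : χ (c * t) < 0 := hnz _ hct0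
  have hlogct : Real.log (-(c * t)) = Real.log c + Real.log (-t) := by
    rw [show -(c * t) = c * (-t) by ring, Real.log_mul (ne_of_gt hcpos) (by linarith)]
  have hle : Real.log (-χ (c * t)) ≤ Real.log (-χ t) + M * Real.log c := by
    have := hFle
    simp only [hF] at this
    rw [hlogct] at this
    linarith
  have : -χ (c * t) ≤ (-χ t) * c ^ M := by
    calc -χ (c * t) = Real.exp (Real.log (-χ (c * t))) := (Real.exp_log (by linarith)).symm
      _ ≤ Real.exp (Real.log (-χ t) + M * Real.log c) := Real.exp_le_exp.2 hle
      _ = (-χ t) * Real.exp (Real.log c * M) := by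
          rw [Real.exp_add, Real.exp_log (by linarith)]; ring_nf
      _ = (-χ t) * c ^ M := by rw [← Real.rpow_def_of_pos hcpos]
  linarith [this]
end

section
/- Let μ be a positive measure vanishing on a family 𝒫 of 'negligible' sets closed under countable unions, and let T : functions → measures satisfy: for all admissible u, v, T(max(u,v)) ≥ 1_{u>v}·T(u) + 1_{u<v}·T(v). If T(u) ≥ μ, T(v) ≥ μ, and μ({u = v + t}) = 0 for all t outside a countable set, and T(max(u, v + ε_j)) → T(max(u,v)) weakly along some sequence ε_j ↓ 0 avoiding the countable exceptional set, then T(max(u,v)) ≥ μ. -/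
open MeasureTheory Filter

/-- Abstract form of Corollary 5.4 (the maximum of two supersolutions is a supersolution)
for an operator `T` such as `(ω + dd^c ·)ⁿ`: if `μ` vanishes on a family `Pfam` of
negligible (pluripolar) sets closed under countable unions, `T` satisfies the indicator
inequality `T(max(f,g)) ≥ 1_{f>g} T(f) + 1_{g>f} T(g)` on admissible functions,
`T(u) ≥ μ`, `T(v) ≥ μ`, `μ({u = v + t}) = 0` for `t` outside a countable set `I`, and
`T(max(u, v + ε_j)) → T(max(u,v))` along a sequence `ε_j ↓ 0` avoiding `I`, then
`T(max(u,v)) ≥ μ`. -/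
theorem stmt13 {X : Type*} [MeasurableSpace X] (μ : Measure X)
    (Pfam : Set (Set X))
    (hPunion : ∀ s : ℕ → Set X, (∀ i, s i ∈ Pfam) → (⋃ i, s i) ∈ Pfam)
    (hμPfam : ∀ A ∈ Pfam, μ A = 0)
    (Adm : Set (X → ℝ)) (T : (X → ℝ) → Measure X)
    (u v : X → ℝ) (hu : u ∈ Adm) (hv : v ∈ Adm)
    (hshiftmem : ∀ c : ℝ, 0 < c → (fun x => v x + c) ∈ Adm)
    (hInd : ∀ f ∈ Adm, ∀ g ∈ Adm,
        (T f).restrict {x | g x < f x} + (T g).restrict {x | f x < g x}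
          ≤ T fun x => max (f x) (g x))
    (hTu : μ ≤ T u) (hTv : μ ≤ T v)
    (hTshift : ∀ c : ℝ, 0 < c → T (fun x => v x + c) = T v)
    (I : Set ℝ) (hI : I.Countable)
    (hexc : ∀ t ∉ I, μ {x | u x = v x + t} = 0)
    (ε : ℕ → ℝ) (hεpos : ∀ j, 0 < ε j) (hεanti : StrictAnti ε)
    (hε0 : Tendsto ε atTop (nhds 0)) (hεI : ∀ j, ε j ∉ I)
    (hweak : ∀ s : Set X, MeasurableSet s →
        Tendsto (fun j => T (fun x => max (u x) (v x + ε j)) s) atTop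
          (nhds (T (fun x => max (u x) (v x)) s))) :
    μ ≤ T fun x => max (u x) (v x) := by
  refine Measure.le_iff.2 fun s hs => ?_
  have key : ∀ j, μ s ≤ T (fun x => max (u x) (v x + ε j)) s := by
    intro j
    set c := ε j with hc
    have hcpos : 0 < c := hεpos j
    set A : Set X := {x | v x + c < u x}
    set B : Set X := {x | u x < v x + c}
    set E : Set X := {x | u x = v x + c}
    have hE : μ E = 0 := hexc c (hεI j)
    have hcover : s ⊆ (s ∩ A) ∪ (s ∩ B) ∪ E := by
      intro x hx
      rcases lt_trichotomy (u x) (v x + c) with h | h | h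
      · exact Or.inl (Or.inr ⟨hx, h⟩)
      · exact Or.inr h
      · exact Or.inl (Or.inl ⟨hx, h⟩)
    have h1 : μ s ≤ μ (s ∩ A) + μ (s ∩ B) := by
      calc μ s ≤ μ ((s ∩ A) ∪ (s ∩ B) ∪ E) := measure_mono hcover
        _ ≤ μ ((s ∩ A) ∪ (s ∩ B)) + μ E := measure_union_le _ _
        _ = μ ((s ∩ A) ∪ (s ∩ B)) := by rw [hE, add_zero]
        _ ≤ μ (s ∩ A) + μ (s ∩ B) := measure_union_le _ _
    have hA1 : μ (s ∩ A) ≤ (T u).restrict A s := by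
      rw [← Measure.restrict_apply hs]
      exact Measure.le_iff'.1 (Measure.restrict_mono le_rfl hTu) s
    have hB1 : μ (s ∩ B) ≤ (T (fun x => v x + c)).restrict B s := by
      rw [← Measure.restrict_apply hs, hTshift c hcpos]
      exact Measure.le_iff'.1 (Measure.restrict_mono le_rfl hTv) s
    have hsum : (T u).restrict A s + (T (fun x => v x + c)).restrict B s
        ≤ T (fun x => max (u x) (v x + c)) s := by
      have := Measure.le_iff'.1 (hInd u hu (fun x => v x + c) (hshiftmem c hcpos)) s
      simpa [Measure.add_apply] using this
    exact h1.trans ((add_le_add hA1 hB1).trans hsum)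
  exact ge_of_tendsto' (hweak s hs) key
end
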